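/- Let Π be an invertible automaton generating group Γ = ⟨Π⟩ ≤ Aut(A*), and suppose Γ is recurrent and acts transitively on A. Then for every O that is a Γ-orbit on A^ℕ and every letter a ∈ A, the set A·O = {b·v : b ∈ A, v ∈ O} is again a single Γ-orbit on A^ℕ. Consequently the partition of A^ℤ into the sets A^{−ℕ}·O (O a Γ-orbit on A^ℕ) is invariant under the bilateral shift. -/
import Mathlib


/-- Prepend a letter to an infinite word. -/
def consSeq {A : Type*} (a : A) (x : ℕ → A) : ℕ → A
  | 0 => a
  | n + 1 => x n

/-- Key lemma: if `g • x = x'`, then we can map `consSeq a x` to `consSeq b x'`. -/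
lemma consSeq_move {A : Type*} {G : Type*} [Group G] [MulAction G (ℕ → A)]
    (fst : G → A → A) (sec : G → A → G)
    (hcomp : ∀ (g : G) (a : A) (x : ℕ → A),
      g • consSeq a x = consSeq (fst g a) (sec g a • x))
    (hrec : ∀ (a : A) (g : G), ∃ h : G, fst h a = a ∧ sec h a = g)
    (htrans : ∀ a b : A, ∃ g : G, fst g a = b)
    (a b : A) (x x' : ℕ → A) (g : G) (hg : g • x = x') :
    ∃ h : G, h • consSeq a x = consSeq b x' := by
  obtain ⟨g₂, hg₂⟩ := htrans a b
  obtain ⟨h₃, h₃f, h₃s⟩ := hrec b (g * (sec g₂ a)⁻¹)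
  refine ⟨h₃ * g₂, ?_⟩
  rw [mul_smul, hcomp, hg₂, hcomp, h₃f, h₃s, smul_smul, inv_mul_cancel_right, hg]

lemma consSeq_tail_eq {A : Type*} {a b : A} {x y : ℕ → A}
    (h : consSeq a x = consSeq b y) : x = y := by
  funext n
  exact congrFun h (n + 1)

theorem letter_times_orbit_is_orbit {A : Type*} [Fintype A]
    {G : Type*} [Group G] [MulAction G (ℕ → A)]
    (fst : G → A → A) (sec : G → A → G)
    (hcomp : ∀ (g : G) (a : A) (x : ℕ → A),
      g • consSeq a x = consSeq (fst g a) (sec g a • x))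
    (hrec : ∀ (a : A) (g : G), ∃ h : G, fst h a = a ∧ sec h a = g)
    (htrans : ∀ a b : A, ∃ g : G, fst g a = b) :
    (∀ v : ℕ → A, ∃ u : ℕ → A,
        {y : ℕ → A | ∃ (b : A) (x : ℕ → A), x ∈ MulAction.orbit G v ∧ y = consSeq b x}
          = MulAction.orbit G u) ∧
      ∀ x y : ℤ → A,
        ((∃ g : G, g • (fun n : ℕ => x n) = fun n : ℕ => y n) ↔
          ∃ g : G, g • (fun n : ℕ => x ((n : ℤ) - 1)) = fun n : ℕ => y ((n : ℤ) - 1)) := by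
  constructor
  · intro v
    refine ⟨consSeq (v 0) v, ?_⟩
    ext y
    constructor
    · rintro ⟨b, x, ⟨g, rfl⟩, rfl⟩
      obtain ⟨h, hh⟩ := consSeq_move fst sec hcomp hrec htrans (v 0) b v (g • v) g rfl
      exact ⟨h, hh⟩
    · rintro ⟨g, rfl⟩
      exact ⟨fst g (v 0), sec g (v 0) • v, ⟨sec g (v 0), rfl⟩, hcomp g (v 0) v⟩
  · intro x y
    have hx : (fun n : ℕ => x ((n : ℤ) - 1)) = consSeq (x (-1)) (fun n : ℕ => x n) := by
      funext n
      cases n with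
      | zero => simp [consSeq]
      | succ m => simp [consSeq]
    have hy : (fun n : ℕ => y ((n : ℤ) - 1)) = consSeq (y (-1)) (fun n : ℕ => y n) := by
      funext n
      cases n with
      | zero => simp [consSeq]
      | succ m => simp [consSeq]
    rw [hx, hy]
    constructor
    · rintro ⟨g, hg⟩
      exact consSeq_move fst sec hcomp hrec htrans (x (-1)) (y (-1)) _ _ g hg
    · rintro ⟨g, hg⟩
      rw [hcomp] at hg
      exact ⟨sec g (x (-1)), consSeq_tail_eq hg⟩
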